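/- The quantum toroidal algebra U_q(g_tor) is generated as an algebra by its horizontal subalgebra U_h and its vertical subalgebra U_v. -/

import Mathlib

/-!
Common infrastructure for formalising statements from
"Automorphisms of quantum toroidal algebras from an action of the
extended double affine braid group" (D. Laurie).

We work over the field `𝕂 = ℚ(q)` of rational functions, with `q` the
indeterminate.  Quantum groups and quantum affinizations are realised as
`RingQuot`s of free algebras by the defining relations.
-/

noncomputable section
open scoped BigOperators

namespace QTor
open scoped Classical

/-- The ground field `k = ℚ(q)`. -/
abbrev 𝕂 : Type := RatFunc ℚ

/-- The deformation parameter `q`. -/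
abbrev q : 𝕂 := RatFunc.X

/-- quantum integer `[m]_u = (u^m - u^{-m})/(u - u⁻¹)`. -/
def qnum (u : 𝕂) (m : ℤ) : 𝕂 := (u ^ m - u ^ (-m)) / (u - u⁻¹)

/-- quantum factorial `[s]_u!`. -/
def qfact (u : 𝕂) : ℕ → 𝕂
  | 0 => 1
  | s + 1 => qfact u s * qnum u (s + 1)

/-- quantum binomial coefficient `[a choose s]_u`. -/
def qbinom (u : 𝕂) (a s : ℕ) : 𝕂 := qfact u a / (qfact u s * qfact u (a - s))

/-- twisted commutator `[x,y]_u = x y - u • (y x)`. -/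
def tc {A : Type} [Ring A] [Algebra 𝕂 A] (u : 𝕂) (x y : A) : A := x * y - u • (y * x)

/-- Iterated twisted commutator `[b₁,…,b_s]_{u₁ ⋯ u_{s-1}}` (following Jing),
with the pairs `(uₜ, bₜ)` listed **outermost first**, i.e.
`twc [(u_{s-1}, b₁), (u_{s-2}, b₂), …, (u₁, b_{s-1})] b_s`. -/
def twc {A : Type} [Ring A] [Algebra 𝕂 A] : List (𝕂 × A) → A → A
  | [], z => z
  | (u, b) :: rest, z => tc u b (twc rest z)

/-- A symmetrizable generalized Cartan matrix, together with a symmetrizer. -/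
structure GCM (I : Type) where
  A : I → I → ℤ
  d : I → ℕ
  diag : ∀ i, A i i = 2
  offdiag : ∀ ⦃i j⦄, i ≠ j → A i j ≤ 0
  dpos : ∀ i, 0 < d i
  sym : ∀ i j, (d i : ℤ) * A i j = (d j : ℤ) * A j i

/-- `q_i = q^{d_i}`. -/
def GCM.qi {I : Type} (g : GCM I) (i : I) : 𝕂 := q ^ g.d i

/-- Drinfeld "new" style generators for the quantum affinization:
`x b i m` is `x^±_{i,m}` (`b = true` for `+`), `h i r` is `h_{i,r}`,
`k true i = k_i`, `k false i = k_i⁻¹`, `c true = C`, `c false = C⁻¹`. -/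
inductive Gen (I : Type) : Type
  | x : Bool → I → ℤ → Gen I
  | h : I → ℤ → Gen I
  | k : Bool → I → Gen I
  | c : Bool → Gen I

/-- Free algebra on the Drinfeld generators. -/
abbrev FA (I : Type) := FreeAlgebra 𝕂 (Gen I)

namespace FA
variable {I : Type}
def x (b : Bool) (i : I) (m : ℤ) : FA I := FreeAlgebra.ι 𝕂 (Gen.x b i m)
def h (i : I) (r : ℤ) : FA I := FreeAlgebra.ι 𝕂 (Gen.h i r)
def k (i : I) : FA I := FreeAlgebra.ι 𝕂 (Gen.k true i)
def kinv (i : I) : FA I := FreeAlgebra.ι 𝕂 (Gen.k false i)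
def c : FA I := FreeAlgebra.ι 𝕂 (Gen.c true)
def cinv : FA I := FreeAlgebra.ι 𝕂 (Gen.c false)
/-- `C^m` for `m : ℤ`, using `C⁻¹` for negative exponents. -/
def cpow (m : ℤ) : FA I := if 0 ≤ m then c ^ m.toNat else (cinv : FA I) ^ (-m).toNat
/-- `k_i^m` for `m : ℤ`. -/
def kpow (i : I) (m : ℤ) : FA I := if 0 ≤ m then k i ^ m.toNat else kinv i ^ (-m).toNat
end FA

/-- Auxiliary sum in the definition of the elements `φ^±_{i,±r}`:
the coefficient of `z^{±r}` in `exp(±(q_i - q_i⁻¹) Σ_{s>0} h_{i,±s} z^{±s})`,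
expanded as a sum over compositions of `r`.  Here `ε = ±1`. -/
def phiAux {I : Type} (u : 𝕂) (i : I) (ε : ℤ) (r : ℕ) : FA I :=
  ∑ l ∈ Finset.range (r + 1),
    (((ε : 𝕂) ^ l * (u - u⁻¹) ^ l) / (Nat.factorial l : 𝕂)) •
      ∑ comp ∈ (Finset.Nat.antidiagonalTuple l r).filter (fun f => ∀ t, f t ≠ 0),
        (List.ofFn (fun t : Fin l => FA.h i (ε * (comp t : ℤ)))).prod

/-- The elements `φ^±_{i,m}` of the free algebra: `φ^+_{i,r}` is supported in
degrees `r ≥ 0` and `φ^-_{i,r}` in degrees `r ≤ 0`, defined by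
`Σ_{s ≥ 0} φ^±_{i,±s} z^{±s} = k_i^{±1} exp(±(q_i - q_i⁻¹) Σ_{s'>0} h_{i,±s'} z^{±s'})`. -/
def phi {I : Type} (g : GCM I) (b : Bool) (i : I) (m : ℤ) : FA I :=
  if b then (if 0 ≤ m then FA.k i * phiAux (g.qi i) i 1 m.toNat else 0)
  else (if m ≤ 0 then FA.kinv i * phiAux (g.qi i) i (-1) (-m).toNat else 0)

/-- The defining relations of the quantum affinization `Û_q` (Definition of
the quantum affinization / quantum toroidal algebra). -/
inductive ARel {I : Type} (g : GCM I) : FA I → FA I → Prop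
  /- `C^{±1}` is central -/
  | c_comm (b : Bool) (a : Gen I) :
      ARel g (FreeAlgebra.ι 𝕂 (Gen.c b) * FreeAlgebra.ι 𝕂 a)
        (FreeAlgebra.ι 𝕂 a * FreeAlgebra.ι 𝕂 (Gen.c b))
  /- `C C⁻¹ = C⁻¹ C = 1` -/
  | c_inv (b : Bool) :
      ARel g (FreeAlgebra.ι 𝕂 (Gen.c b) * FreeAlgebra.ι 𝕂 (Gen.c (!b))) 1
  /- `k_i k_i⁻¹ = k_i⁻¹ k_i = 1` -/
  | k_inv (b : Bool) (i : I) :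
      ARel g (FreeAlgebra.ι 𝕂 (Gen.k b i) * FreeAlgebra.ι 𝕂 (Gen.k (!b) i)) 1
  /- `[k_i, k_j] = 0` -/
  | kk (b b' : Bool) (i j : I) :
      ARel g (FreeAlgebra.ι 𝕂 (Gen.k b i) * FreeAlgebra.ι 𝕂 (Gen.k b' j))
        (FreeAlgebra.ι 𝕂 (Gen.k b' j) * FreeAlgebra.ι 𝕂 (Gen.k b i))
  /- `[k_i, h_{j,r}] = 0` -/
  | kh (b : Bool) (i j : I) (r : ℤ) :
      ARel g (FreeAlgebra.ι 𝕂 (Gen.k b i) * FA.h j r) (FA.h j r * FreeAlgebra.ι 𝕂 (Gen.k b i))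
  /- the generator `h_{i,0}` is spurious (only `r ≠ 0` occurs) -/
  | h_zero (i : I) : ARel g (FA.h i 0) 0
  /- `[h_{i,r}, h_{j,s}] = δ_{r+s,0} ([r a_{ij}]_i / r) (C^r - C^{-r})/(q_j - q_j⁻¹)` -/
  | hh (i j : I) (r s : ℤ) (hr : r ≠ 0) (hs : s ≠ 0) :
      ARel g (FA.h i r * FA.h j s)
        (FA.h j s * FA.h i r +
          (if r + s = 0 then
            (qnum (g.qi i) (r * g.A i j) / (r : 𝕂) / (g.qi j - (g.qi j)⁻¹)) •
              (FA.cpow r - FA.cpow (-r))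
          else 0))
  /- `k_i x^±_{j,m} k_i⁻¹ = q_i^{± a_{ij}} x^±_{j,m}` -/
  | kx (b : Bool) (i j : I) (m : ℤ) :
      ARel g (FA.k i * FA.x b j m * FA.kinv i)
        ((g.qi i ^ (cond b (g.A i j) (-(g.A i j)))) • FA.x b j m)
  /- `[h_{i,r}, x^±_{j,m}] = ±([r a_{ij}]_i / r) C^{(r ∓ |r|)/2} x^±_{j,r+m}` -/
  | hx (b : Bool) (i j : I) (r m : ℤ) (hr : r ≠ 0) :
      ARel g (FA.h i r * FA.x b j m - FA.x b j m * FA.h i r)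
        (((cond b 1 (-1) : 𝕂) * qnum (g.qi i) (r * g.A i j) / (r : 𝕂)) •
          (FA.cpow (cond b (min r 0) (max r 0)) * FA.x b j (r + m)))
  /- `[x^+_{i,m}, x^-_{j,l}] = δ_{ij}/(q_i - q_i⁻¹) (C^{-l} φ^+_{i,m+l} - C^{-m} φ^-_{i,m+l})` -/
  | xpm (i j : I) (m l : ℤ) :
      ARel g (FA.x true i m * FA.x false j l - FA.x false j l * FA.x true i m)
        (if i = j then
          ((g.qi i - (g.qi i)⁻¹)⁻¹) •
            (FA.cpow (-l) * phi g true i (m + l) - FA.cpow (-m) * phi g false i (m + l))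
        else 0)
  /- `[x^±_{i,m+1}, x^±_{j,l}]_{q_i^{± a_{ij}}} + [x^±_{j,l+1}, x^±_{i,m}]_{q_i^{± a_{ij}}} = 0` -/
  | xx (b : Bool) (i j : I) (m l : ℤ) :
      ARel g (tc (g.qi i ^ (cond b (g.A i j) (-(g.A i j)))) (FA.x b i (m + 1)) (FA.x b j l) +
            tc (g.qi i ^ (cond b (g.A i j) (-(g.A i j)))) (FA.x b j (l + 1)) (FA.x b i m)) 0
  /- quantum Serre relations -/
  | serre (b : Bool) (i j : I) (hij : i ≠ j) (m : ℤ)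
      (ms : Fin (1 - g.A i j).toNat → ℤ) :
      ARel g (∑ σ : Equiv.Perm (Fin (1 - g.A i j).toNat),
        ∑ s ∈ Finset.range ((1 - g.A i j).toNat + 1),
          (((-1 : 𝕂) ^ s) * qbinom (g.qi i) (1 - g.A i j).toNat s) •
            (((List.ofFn fun t => FA.x b i (ms (σ t))).take s).prod * FA.x b j m *
             ((List.ofFn fun t => FA.x b i (ms (σ t))).drop s).prod)) 0

/-- The quantum affinization of the quantum group attached to `g` (in
particular, the quantum toroidal algebra when `g` is of affine type, and the
untwisted quantum affine algebra in its Drinfeld new realization when `g` is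
of finite type). -/
abbrev QA {I : Type} (g : GCM I) : Type := RingQuot (ARel g)

namespace QA
variable {I : Type} (g : GCM I)
/-- canonical projection from the free algebra. -/
def mk : FA I →ₐ[𝕂] QA g := RingQuot.mkAlgHom 𝕂 (ARel g)
def x (b : Bool) (i : I) (m : ℤ) : QA g := mk g (FA.x b i m)
def h (i : I) (r : ℤ) : QA g := mk g (FA.h i r)
def k (i : I) : QA g := mk g (FA.k i)
def kinv (i : I) : QA g := mk g (FA.kinv i)
def c : QA g := mk g FA.c
def cinv : QA g := mk g FA.cinv
def cpow (m : ℤ) : QA g := mk g (FA.cpow m)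
def kpow (i : I) (m : ℤ) : QA g := mk g (FA.kpow i m)
/-- divided power `(x)^{(s)} = x^s / [s]_i!`. -/
def dpow (u : 𝕂) (s : ℕ) (a : QA g) : QA g := (qfact u s)⁻¹ • a ^ s
end QA

end QTor

namespace QTor
open scoped Classical

/-! ### The Drinfeld–Jimbo presentation of quantum groups -/

/-- Chevalley style generators: `e true i = x_i^+`, `e false i = x_i^-`,
`t true i = t_i`, `t false i = t_i⁻¹`. -/
inductive DJGen (I : Type) : Type
  | e : Bool → I → DJGen I
  | t : Bool → I → DJGen I

abbrev DJF (I : Type) := FreeAlgebra 𝕂 (DJGen I)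

namespace DJF
variable {I : Type}
def e (b : Bool) (i : I) : DJF I := FreeAlgebra.ι 𝕂 (DJGen.e b i)
def t (i : I) : DJF I := FreeAlgebra.ι 𝕂 (DJGen.t true i)
def tinv (i : I) : DJF I := FreeAlgebra.ι 𝕂 (DJGen.t false i)
end DJF

/-- Defining relations of the Drinfeld–Jimbo quantum group `U_q(𝔰)`
(Definition of the quantum group). -/
inductive DJRel {I : Type} (g : GCM I) : DJF I → DJF I → Prop
  | t_inv (b : Bool) (i : I) :
      DJRel g (FreeAlgebra.ι 𝕂 (DJGen.t b i) * FreeAlgebra.ι 𝕂 (DJGen.t (!b) i)) 1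
  | tt (b b' : Bool) (i j : I) :
      DJRel g (FreeAlgebra.ι 𝕂 (DJGen.t b i) * FreeAlgebra.ι 𝕂 (DJGen.t b' j))
        (FreeAlgebra.ι 𝕂 (DJGen.t b' j) * FreeAlgebra.ι 𝕂 (DJGen.t b i))
  /- `t_i x_j^± t_i⁻¹ = q_i^{± a_{ij}} x_j^±` -/
  | te (b : Bool) (i j : I) :
      DJRel g (DJF.t i * DJF.e b j * DJF.tinv i)
        ((g.qi i ^ (cond b (g.A i j) (-(g.A i j)))) • DJF.e b j)
  /- `[x_i^+, x_j^-] = δ_{ij} (t_i - t_i⁻¹)/(q_i - q_i⁻¹)` -/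
  | ef (i j : I) :
      DJRel g (DJF.e true i * DJF.e false j - DJF.e false j * DJF.e true i)
        (if i = j then ((g.qi i - (g.qi i)⁻¹)⁻¹) • (DJF.t i - DJF.tinv i) else 0)
  /- quantum Serre relations `Σ (-1)^s (x_i^±)^{(s)} x_j^± (x_i^±)^{(1-a_{ij}-s)} = 0` -/
  | serre (b : Bool) (i j : I) (hij : i ≠ j) :
      DJRel g (∑ s ∈ Finset.range ((1 - g.A i j).toNat + 1),
        (((-1 : 𝕂) ^ s) * (qfact (g.qi i) s)⁻¹ * (qfact (g.qi i) ((1 - g.A i j).toNat - s))⁻¹) •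
          (DJF.e b i ^ s * DJF.e b j * DJF.e b i ^ ((1 - g.A i j).toNat - s))) 0

/-- The Drinfeld–Jimbo quantum group `U_q(𝔰)` of the Kac–Moody algebra with
generalized Cartan matrix `g`. -/
abbrev QG {I : Type} (g : GCM I) : Type := RingQuot (DJRel g)

namespace QG
variable {I : Type} (g : GCM I)
def mk : DJF I →ₐ[𝕂] QG g := RingQuot.mkAlgHom 𝕂 (DJRel g)
def e (b : Bool) (i : I) : QG g := mk g (DJF.e b i)
def t (i : I) : QG g := mk g (DJF.t i)
def tinv (i : I) : QG g := mk g (DJF.tinv i)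
def tpow (i : I) (m : ℤ) : QG g := if 0 ≤ m then t g i ^ m.toNat else tinv g i ^ (-m).toNat
end QG

end QTor

namespace QTor
open scoped Classical

/-! ### Affine Cartan data and the quantum toroidal algebra -/

/-- An (indecomposable) affine generalized Cartan matrix on the node set
`I = {0, 1, …, n}`, encoded by the existence of a positive integral null
vector (the marks `a_i`), connectedness of the Dynkin diagram, and the
condition `a_{ij} a_{ji} ≤ 3` excluding types `A₁⁽¹⁾` and `A₂⁽²⁾`. -/
structure AffData (n : ℕ) where
  g : GCM (Fin (n + 1))
  mark : Fin (n + 1) → ℤ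
  mark_pos : ∀ i, 0 < mark i
  null : ∀ i, ∑ j, g.A i j * mark j = 0
  connected : ∀ i j, Relation.ReflTransGen (fun a b => g.A a b ≠ 0) i j
  small : ∀ ⦃i j⦄, i ≠ j → g.A i j * g.A j i ≤ 3

/-- simply laced untwisted affine type (`A_n⁽¹⁾ (n ≥ 2)`, `D_n⁽¹⁾`, `E⁽¹⁾`). -/
def AffData.SimplyLaced {n : ℕ} (D : AffData n) : Prop :=
  (∀ i, D.g.d i = 1) ∧ ∀ ⦃i j⦄, i ≠ j → -1 ≤ D.g.A i j

/-- The finite part of an affine GCM: the principal submatrix on `I₀ = {1,…,n}`. -/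
def finGCM {n : ℕ} (g : GCM (Fin (n + 1))) : GCM (Fin n) where
  A i j := g.A i.succ j.succ
  d i := g.d i.succ
  diag i := g.diag _
  offdiag i j hij := g.offdiag (fun hc => hij (Fin.succ_injective _ hc))
  dpos i := g.dpos _
  sym i j := g.sym _ _

namespace QA
variable {n : ℕ} (D : AffData n)
/-- the central element `k₀^{a₀} k₁^{a₁} ⋯ k_n^{a_n}`. -/
def kmark : QA D.g := (List.ofFn fun i => QA.kpow D.g i (D.mark i)).prod
/-- `(k₀^{a₀} ⋯ k_n^{a_n})⁻¹`. -/
def kmarkinv : QA D.g := (List.ofFn fun i => QA.kpow D.g i (-(D.mark i))).prod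
/-- `k_θ = k₁^{a₁} ⋯ k_n^{a_n}`. -/
def ktheta : QA D.g := (List.ofFn fun i : Fin n => QA.kpow D.g i.succ (D.mark i.succ)).prod
/-- `k_θ⁻¹`. -/
def kthetainv : QA D.g := (List.ofFn fun i : Fin n => QA.kpow D.g i.succ (-(D.mark i.succ))).prod
end QA

/-- `h : U_q(ĝ) → U_q(g_tor)` is the horizontal homomorphism:
`x_i^± ↦ x^±_{i,0}`, `t_i ↦ k_i` for all `i ∈ I`. -/
def IsHoriz {n : ℕ} (D : AffData n) (h : QG D.g →ₐ[𝕂] QA D.g) : Prop :=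
  (∀ b i, h (QG.e D.g b i) = QA.x D.g b i 0) ∧
  (∀ i, h (QG.t D.g i) = QA.k D.g i) ∧
  (∀ i, h (QG.tinv D.g i) = QA.kinv D.g i)

/-- `v : U_q(Z_n⁽¹⁾) → U_q(g_tor)` is the vertical homomorphism from the
quantum affine algebra in its Drinfeld new realization (the quantum
affinization of the finite part): `x^±_{i,m} ↦ x^±_{i,m}`, `h_{i,r} ↦ h_{i,r}`,
`k_i ↦ k_i`, `C ↦ C` for `i ∈ I₀`. -/
def IsVert {n : ℕ} (D : AffData n) (v : QA (finGCM D.g) →ₐ[𝕂] QA D.g) : Prop :=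
  (∀ b (i : Fin n) m, v (QA.x (finGCM D.g) b i m) = QA.x D.g b i.succ m) ∧
  (∀ (i : Fin n) r, v (QA.h (finGCM D.g) i r) = QA.h D.g i.succ r) ∧
  (∀ i : Fin n, v (QA.k (finGCM D.g) i) = QA.k D.g i.succ) ∧
  (∀ i : Fin n, v (QA.kinv (finGCM D.g) i) = QA.kinv D.g i.succ) ∧
  (v (QA.c (finGCM D.g)) = QA.c D.g) ∧ (v (QA.cinv (finGCM D.g)) = QA.cinv D.g)

/-- a length function `o : I → {±1}` with `o(i) = -o(j)` whenever `a_{ij} < 0`. -/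
def IsLengthFun {n : ℕ} (D : AffData n) (o : Fin (n + 1) → 𝕂) : Prop :=
  (∀ i, o i = 1 ∨ o i = -1) ∧ ∀ ⦃i j⦄, D.g.A i j < 0 → o j = -o i

end QTor

namespace QTor
open scoped Classical
open MulOpposite

/-! ### Standard (anti-)automorphisms of quantum affinizations,
characterised by their values on generators. -/

/-- `η` is the anti-involution of the quantum affinization with
`η(x^±_{i,m}) = x^±_{i,-m}`, `η(h_{i,r}) = -C^r h_{i,-r}`, `η(k_i) = k_i⁻¹`,
`η(C) = C`, encoded as an algebra map into the opposite algebra. -/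
def IsEta {I : Type} (g : GCM I) (η : QA g →ₐ[𝕂] (QA g)ᵐᵒᵖ) : Prop :=
  (∀ b i m, η (QA.x g b i m) = op (QA.x g b i (-m))) ∧
  (∀ i r, η (QA.h g i r) = op (-(QA.cpow g r * QA.h g i (-r)))) ∧
  (∀ i, η (QA.k g i) = op (QA.kinv g i)) ∧
  (∀ i, η (QA.kinv g i) = op (QA.k g i)) ∧
  (η (QA.c g) = op (QA.c g)) ∧ (η (QA.cinv g) = op (QA.cinv g))

/-- `σ` is the anti-involution of the Drinfeld–Jimbo quantum group with
`σ(x_j^±) = x_j^±` and `σ(t_j) = t_j⁻¹`. -/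
def IsSigma {I : Type} (g : GCM I) (σ : QG g →ₐ[𝕂] (QG g)ᵐᵒᵖ) : Prop :=
  (∀ b i, σ (QG.e g b i) = op (QG.e g b i)) ∧
  (∀ i, σ (QG.t g i) = op (QG.tinv g i)) ∧
  (∀ i, σ (QG.tinv g i) = op (QG.t g i))

/-- Lusztig's braid group automorphism `T_i` of the Drinfeld–Jimbo quantum
group, determined by its values on the Chevalley generators. -/
def IsBraidDJ {I : Type} (g : GCM I) (i : I) (T : QG g ≃ₐ[𝕂] QG g) : Prop :=
  (∀ j, T (QG.t g j) = QG.t g j * QG.tpow g i (-(g.A i j))) ∧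
  (T (QG.e g true i) = -(QG.e g false i * QG.t g i)) ∧
  (T (QG.e g false i) = -(QG.tinv g i * QG.e g true i)) ∧
  (∀ j, j ≠ i →
    T (QG.e g true j) =
      ∑ s ∈ Finset.range ((-(g.A i j)).toNat + 1),
        (((-1 : 𝕂) ^ s) * ((g.qi i)⁻¹) ^ s *
          (qfact (g.qi i) ((-(g.A i j)).toNat - s))⁻¹ * (qfact (g.qi i) s)⁻¹) •
          (QG.e g true i ^ ((-(g.A i j)).toNat - s) * QG.e g true j * QG.e g true i ^ s)) ∧
  (∀ j, j ≠ i →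
    T (QG.e g false j) =
      ∑ s ∈ Finset.range ((-(g.A i j)).toNat + 1),
        (((-1 : 𝕂) ^ s) * (g.qi i) ^ s *
          (qfact (g.qi i) s)⁻¹ * (qfact (g.qi i) ((-(g.A i j)).toNat - s))⁻¹) •
          (QG.e g false i ^ s * QG.e g false j * QG.e g false i ^ ((-(g.A i j)).toNat - s)))

/-- The braid operator `𝒯_i` of a quantum affinization (Proposition
`Ti properties`), determined by its values on the generators of the finite
Drinfeld new style presentation. -/
def IsBraidDN {I : Type} (g : GCM I) (i : I) (T : QA g ≃ₐ[𝕂] QA g) : Prop :=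
  (T (QA.c g) = QA.c g) ∧ (T (QA.cinv g) = QA.cinv g) ∧
  (∀ j, T (QA.k g j) = QA.k g j * QA.kpow g i (-(g.A i j))) ∧
  (T (QA.x g true i 0) = -(QA.x g false i 0 * QA.k g i)) ∧
  (T (QA.x g false i 0) = -(QA.kinv g i * QA.x g true i 0)) ∧
  (T (QA.x g true i (-1)) =
    ∑ s ∈ Finset.range 3,
      (((-1 : 𝕂) ^ s) * (g.qi i) ^ s * (qfact (g.qi i) s)⁻¹ * (qfact (g.qi i) (2 - s))⁻¹) •
        (QA.x g false i 0 ^ s * QA.x g true i (-1) * QA.x g false i 0 ^ (2 - s) * QA.k g i)) ∧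
  (T (QA.x g false i 1) =
    ∑ s ∈ Finset.range 3,
      (((-1 : 𝕂) ^ s) * ((g.qi i)⁻¹) ^ s * (qfact (g.qi i) (2 - s))⁻¹ * (qfact (g.qi i) s)⁻¹) •
        (QA.kinv g i * (QA.x g true i 0 ^ (2 - s) * QA.x g false i 1 * QA.x g true i 0 ^ s))) ∧
  (∀ j, j ≠ i → ∀ m,
    T (QA.x g true j m) =
      ∑ s ∈ Finset.range ((-(g.A i j)).toNat + 1),
        (((-1 : 𝕂) ^ s) * ((g.qi i)⁻¹) ^ s *
          (qfact (g.qi i) ((-(g.A i j)).toNat - s))⁻¹ * (qfact (g.qi i) s)⁻¹) •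
          (QA.x g true i 0 ^ ((-(g.A i j)).toNat - s) * QA.x g true j m * QA.x g true i 0 ^ s)) ∧
  (∀ j, j ≠ i → ∀ m,
    T (QA.x g false j m) =
      ∑ s ∈ Finset.range ((-(g.A i j)).toNat + 1),
        (((-1 : 𝕂) ^ s) * (g.qi i) ^ s *
          (qfact (g.qi i) s)⁻¹ * (qfact (g.qi i) ((-(g.A i j)).toNat - s))⁻¹) •
          (QA.x g false i 0 ^ s * QA.x g false j m * QA.x g false i 0 ^ ((-(g.A i j)).toNat - s)))

/-- The automorphism `𝒳_i` of a quantum affinization: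
`x^±_{j,m} ↦ o(j)^{δ_{ij}} x^±_{j,m∓δ_{ij}}`, `k_j ↦ C^{-δ_{ij}} k_j`,
`h_{j,r} ↦ h_{j,r}`, `C ↦ C`. -/
def IsXAut {I : Type} (g : GCM I) (o : I → 𝕂) (i : I) (X : QA g ≃ₐ[𝕂] QA g) : Prop :=
  (∀ b j m, X (QA.x g b j m) =
    if j = i then o j • QA.x g b j (m - cond b 1 (-1)) else QA.x g b j m) ∧
  (∀ j, X (QA.k g j) = if j = i then QA.cinv g * QA.k g j else QA.k g j) ∧
  (∀ j, X (QA.kinv g j) = if j = i then QA.c g * QA.kinv g j else QA.kinv g j) ∧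
  (∀ j r, X (QA.h g j r) = QA.h g j r) ∧
  (X (QA.c g) = QA.c g) ∧ (X (QA.cinv g) = QA.cinv g)

/-- The automorphism `𝒮_π` of a quantum affinization attached to a diagram
automorphism `π`, relative to a sign function `os i j = o(i)/o(j)`:
`x^±_{i,m} ↦ o_{i,π(i)}^m x^±_{π(i),m}`, `k_i ↦ k_{π(i)}`,
`h_{i,r} ↦ o_{i,π(i)}^r h_{π(i),r}`, `C ↦ C`. -/
def IsSPi {I : Type} (g : GCM I) (os : I → I → 𝕂) (π : Equiv.Perm I)
    (S : QA g ≃ₐ[𝕂] QA g) : Prop :=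
  (∀ b i m, S (QA.x g b i m) = os i (π i) ^ m • QA.x g b (π i) m) ∧
  (∀ i, S (QA.k g i) = QA.k g (π i)) ∧
  (∀ i, S (QA.kinv g i) = QA.kinv g (π i)) ∧
  (∀ i r, S (QA.h g i r) = os i (π i) ^ r • QA.h g (π i) r) ∧
  (S (QA.c g) = QA.c g) ∧ (S (QA.cinv g) = QA.cinv g)

/-- The sign automorphism `ζ_i`, sending `x^±_{i,m} ↦ -x^±_{i,m}` and fixing
all other generators. -/
def IsZeta {I : Type} (g : GCM I) (i : I) (Z : QA g ≃ₐ[𝕂] QA g) : Prop :=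
  (∀ b j m, Z (QA.x g b j m) = if j = i then -QA.x g b j m else QA.x g b j m) ∧
  (∀ j r, Z (QA.h g j r) = QA.h g j r) ∧
  (∀ j, Z (QA.k g j) = QA.k g j) ∧ (∀ j, Z (QA.kinv g j) = QA.kinv g j) ∧
  (Z (QA.c g) = QA.c g) ∧ (Z (QA.cinv g) = QA.cinv g)

end QTor

namespace QTor
open scoped Classical
open MulOpposite

/-! ### Jing's isomorphism data (simply laced case) -/

/-- Condition (3.1) on the sequences used in Jing's isomorphism:
`Σ_{t ≤ s} (α_{i_t}, α_{i_{s+1}}) = ε_s`, with `(α_i, α_j) = d_i a_{ij}`. -/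
def SeqCond {n : ℕ} (D : AffData n) (m : ℕ) (iseq : Fin (m + 1) → Fin n)
    (es : Fin m → ℤ) : Prop :=
  ((m : ℤ) + 2 = ∑ i, D.mark i) ∧
  ∀ s : Fin m,
    (∑ t : Fin (s.val + 1),
      ((D.g.d (iseq (Fin.castLE (Nat.succ_le_succ (le_of_lt s.isLt)) t)).succ : ℤ) *
        D.g.A (iseq (Fin.castLE (Nat.succ_le_succ (le_of_lt s.isLt)) t)).succ
          (iseq s.succ).succ))
      = es s

/-- The image of `x₀^+` under Jing's isomorphism (simply laced case):
`[x^-_{i_{h-1},0}, …, x^-_{i_2,0}, x^-_{i_1,1}]_{q^{ε₁} ⋯ q^{ε_{h-2}}} C k_θ⁻¹`. -/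
def jingXp {n : ℕ} (D : AffData n) (m : ℕ) (iseq : Fin (m + 1) → Fin n)
    (es : Fin m → ℤ) : QA D.g :=
  twc (List.ofFn fun t : Fin m =>
        ((q : 𝕂) ^ es t.rev, QA.x D.g false (iseq t.rev.succ).succ 0))
      (QA.x D.g false (iseq 0).succ 1) * (QA.c D.g * QA.kthetainv D)

/-- The image of `x₀^-` under Jing's isomorphism (simply laced case, so the
constant `a = 1`): `(-q)^{-ε} C⁻¹ k_θ [x^+_{i_{h-1},0}, …, x^+_{i_1,-1}]`. -/
def jingXm {n : ℕ} (D : AffData n) (m : ℕ) (iseq : Fin (m + 1) → Fin n)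
    (es : Fin m → ℤ) : QA D.g :=
  ((-q : 𝕂) ^ (-(∑ t, es t))) •
    (QA.cinv D.g * QA.ktheta D *
      twc (List.ofFn fun t : Fin m =>
            ((q : 𝕂) ^ es t.rev, QA.x D.g true (iseq t.rev.succ).succ 0))
          (QA.x D.g true (iseq 0).succ (-1)))

/-- `v ∘ J : U_q(ĝ) → U_q(g_tor)`: the vertical homomorphism precomposed
with Jing's isomorphism, i.e. the vertical copy of the Drinfeld–Jimbo
quantum affine algebra.  The values on `x₀^±` are given by Jing's twisted
commutator formulas (valid for any sequence satisfying (3.1)). -/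
def IsVertDJ {n : ℕ} (D : AffData n) (vd : QG D.g →ₐ[𝕂] QA D.g) : Prop :=
  (∀ b (i : Fin n), vd (QG.e D.g b i.succ) = QA.x D.g b i.succ 0) ∧
  (∀ i : Fin n, vd (QG.t D.g i.succ) = QA.k D.g i.succ) ∧
  (∀ i : Fin n, vd (QG.tinv D.g i.succ) = QA.kinv D.g i.succ) ∧
  (vd (QG.t D.g 0) = QA.c D.g * QA.kthetainv D) ∧
  (vd (QG.tinv D.g 0) = QA.ktheta D * QA.cinv D.g) ∧
  (∀ m iseq es, SeqCond D m iseq es → vd (QG.e D.g true 0) = jingXp D m iseq es) ∧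
  (∀ m iseq es, SeqCond D m iseq es → vd (QG.e D.g false 0) = jingXm D m iseq es)

/-- finite-side versions of the Jing elements (inside `U_q(Z_n⁽¹⁾)` in its
Drinfeld new realization). -/
def jingXpF {n : ℕ} (D : AffData n) (m : ℕ) (iseq : Fin (m + 1) → Fin n)
    (es : Fin m → ℤ) : QA (finGCM D.g) :=
  twc (List.ofFn fun t : Fin m =>
        ((q : 𝕂) ^ es t.rev, QA.x (finGCM D.g) false (iseq t.rev.succ) 0))
      (QA.x (finGCM D.g) false (iseq 0) 1) *
    (QA.c (finGCM D.g) *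
      (List.ofFn fun i : Fin n => QA.kpow (finGCM D.g) i (-(D.mark i.succ))).prod)

def jingXmF {n : ℕ} (D : AffData n) (m : ℕ) (iseq : Fin (m + 1) → Fin n)
    (es : Fin m → ℤ) : QA (finGCM D.g) :=
  ((-q : 𝕂) ^ (-(∑ t, es t))) •
    (QA.cinv (finGCM D.g) *
      (List.ofFn fun i : Fin n => QA.kpow (finGCM D.g) i (D.mark i.succ)).prod *
      twc (List.ofFn fun t : Fin m =>
            ((q : 𝕂) ^ es t.rev, QA.x (finGCM D.g) true (iseq t.rev.succ) 0))
          (QA.x (finGCM D.g) true (iseq 0) (-1)))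

/-- Jing's isomorphism `J : U_q(ĝ) (Drinfeld–Jimbo) ≅ U_q(ĝ) (Drinfeld new)`,
determined by `x_i^± ↦ x^±_{i,0}`, `t_i ↦ k_i` for `i ∈ I₀`, `t₀ ↦ C k_θ⁻¹`,
and by the twisted-commutator formulas on `x₀^±`. -/
def IsJing {n : ℕ} (D : AffData n) (J : QG D.g ≃ₐ[𝕂] QA (finGCM D.g)) : Prop :=
  (∀ b (i : Fin n), J (QG.e D.g b i.succ) = QA.x (finGCM D.g) b i 0) ∧
  (∀ i : Fin n, J (QG.t D.g i.succ) = QA.k (finGCM D.g) i) ∧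
  (∀ i : Fin n, J (QG.tinv D.g i.succ) = QA.kinv (finGCM D.g) i) ∧
  (J (QG.t D.g 0) = QA.c (finGCM D.g) *
    (List.ofFn fun i : Fin n => QA.kpow (finGCM D.g) i (-(D.mark i.succ))).prod) ∧
  (J (QG.tinv D.g 0) =
    (List.ofFn fun i : Fin n => QA.kpow (finGCM D.g) i (D.mark i.succ)).prod *
      QA.cinv (finGCM D.g)) ∧
  (∀ m iseq es, SeqCond D m iseq es → J (QG.e D.g true 0) = jingXpF D m iseq es) ∧
  (∀ m iseq es, SeqCond D m iseq es → J (QG.e D.g false 0) = jingXmF D m iseq es)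

end QTor

namespace QTor
open scoped Classical

/-! ### The extended double affine braid group -/

/-- The lattice `P̊^∨` of finite coweights, in coordinates with respect to the
fundamental coweights `ω_1^∨, …, ω_n^∨`. -/
abbrev Lat (n : ℕ) := Fin n →₀ ℤ

/-- The pairing `(β, α_i)` of a finite coweight with the affine simple roots
(with respect to the level-zero embedding `ω_i^∨ ↦ a₀ λ_i^∨ - a_i λ₀^∨`). -/
def pr {n : ℕ} (D : AffData n) (β : Lat n) (i : Fin (n + 1)) : ℤ :=
  if h : i = 0 then -(∑ j, D.mark j.succ * β j) else D.mark 0 * β (i.pred h)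

/-- `cv i` is the projection of the coroot `α_i^∨` to `P̊^∨`, characterised by
`a₀ (cv i)_k = a_{ik}`. -/
def CvecOK {n : ℕ} (D : AffData n) (cv : Fin (n + 1) → Lat n) : Prop :=
  ∀ i k, D.mark 0 * cv i k = D.g.A i k.succ

/-- The simple reflection `s_i(β) = β - (β, α_i) · (proj α_i^∨)` acting on `P̊^∨`. -/
def srefl {n : ℕ} (D : AffData n) (cv : Fin (n + 1) → Lat n) (i : Fin (n + 1))
    (β : Lat n) : Lat n :=
  β - pr D β i • cv i

/-- `ω_i^∨` as an element of `P̊^∨` (with the convention `ω₀^∨ = 0`). -/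
def omBase {n : ℕ} (i : Fin (n + 1)) : Lat n :=
  if h : i = 0 then 0 else Finsupp.single (i.pred h) 1

/-- The linear action of a diagram automorphism `π` on `P̊^∨`:
`π(ω_i^∨) = ω_{π(i)}^∨ - a_i ω_{π(0)}^∨`. -/
def omLat {n : ℕ} (D : AffData n) (π : Equiv.Perm (Fin (n + 1))) (β : Lat n) : Lat n :=
  ∑ j : Fin n, β j • (omBase (π j.succ) - D.mark j.succ • omBase (π 0))

/-- `Ω` is (a realisation of) the group of outer automorphisms of the affine
Dynkin diagram: it acts faithfully by diagram automorphisms, only the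
identity fixes the node `0`, and it meets every orbit of `0` under
diagram automorphisms. -/
def IsOuterGroup {n : ℕ} (D : AffData n) {Ω : Type} [Group Ω]
    (ρ : Ω →* Equiv.Perm (Fin (n + 1))) : Prop :=
  Function.Injective ρ ∧
  (∀ ω : Ω, ∀ i j, D.g.A (ρ ω i) (ρ ω j) = D.g.A i j) ∧
  (∀ ω : Ω, ω ≠ 1 → ρ ω 0 ≠ 0) ∧
  (∀ π : Equiv.Perm (Fin (n + 1)), (∀ i j, D.g.A (π i) (π j) = D.g.A i j) →
    ∃ ω : Ω, ρ ω 0 = π 0)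

/-- Generators of the extended double affine braid group `B̈`: the Coxeter
generators `T_i (i ∈ I)`, the lattice `{X_β : β ∈ P̊^∨}` and the group `Ω`. -/
inductive DGen (n : ℕ) (Ω : Type) : Type
  | T : Fin (n + 1) → DGen n Ω
  | Xl : Lat n → DGen n Ω
  | pi : Ω → DGen n Ω

/-- alternating word `x y x y ⋯` of length `m`. -/
def altWord {G : Type} [Monoid G] (x y : G) : ℕ → G
  | 0 => 1
  | m + 1 => x * altWord y x m

/-- The defining relations of the extended double affine braid group `B̈`. -/
inductive DRel {n : ℕ} (D : AffData n) (cv : Fin (n + 1) → Lat n) {Ω : Type} [Group Ω]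
    (ρ : Ω →* Equiv.Perm (Fin (n + 1))) : FreeGroup (DGen n Ω) → Prop
  /- braid relations, with `a_{ij} a_{ji} + 2` factors on each side -/
  | braid (i j : Fin (n + 1)) (hij : i ≠ j) :
      DRel D cv ρ
        (altWord (FreeGroup.of (DGen.T i)) (FreeGroup.of (DGen.T j))
            ((D.g.A i j * D.g.A j i).toNat + 2) *
          (altWord (FreeGroup.of (DGen.T j)) (FreeGroup.of (DGen.T i))
            ((D.g.A i j * D.g.A j i).toNat + 2))⁻¹)
  /- `X_β X_γ = X_{β+γ}` -/
  | latt (β γ : Lat n) :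
      DRel D cv ρ (FreeGroup.of (DGen.Xl β) * FreeGroup.of (DGen.Xl γ) *
        (FreeGroup.of (DGen.Xl (β + γ)))⁻¹)
  /- `T_i X_β = X_β T_i` if `(β, α_i) = 0` -/
  | tx0 (i : Fin (n + 1)) (β : Lat n) (h : pr D β i = 0) :
      DRel D cv ρ (FreeGroup.of (DGen.T i) * FreeGroup.of (DGen.Xl β) *
        (FreeGroup.of (DGen.T i))⁻¹ * (FreeGroup.of (DGen.Xl β))⁻¹)
  /- `T_i⁻¹ X_β T_i⁻¹ = X_{s_i(β)}` if `(β, α_i) = 1` -/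
  | tx1 (i : Fin (n + 1)) (β : Lat n) (h : pr D β i = 1) :
      DRel D cv ρ ((FreeGroup.of (DGen.T i))⁻¹ * FreeGroup.of (DGen.Xl β) *
        (FreeGroup.of (DGen.T i))⁻¹ * (FreeGroup.of (DGen.Xl (srefl D cv i β)))⁻¹)
  /- `π T_i π⁻¹ = T_{π(i)}` -/
  | piT (ω : Ω) (i : Fin (n + 1)) :
      DRel D cv ρ (FreeGroup.of (DGen.pi ω) * FreeGroup.of (DGen.T i) *
        (FreeGroup.of (DGen.pi ω))⁻¹ * (FreeGroup.of (DGen.T (ρ ω i)))⁻¹)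
  /- `π X_β π⁻¹ = X_{π(β)}` -/
  | piX (ω : Ω) (β : Lat n) :
      DRel D cv ρ (FreeGroup.of (DGen.pi ω) * FreeGroup.of (DGen.Xl β) *
        (FreeGroup.of (DGen.pi ω))⁻¹ * (FreeGroup.of (DGen.Xl (omLat D (ρ ω) β)))⁻¹)
  /- the generators indexed by `Ω` multiply as in `Ω` -/
  | pimul (ω ω' : Ω) :
      DRel D cv ρ (FreeGroup.of (DGen.pi ω) * FreeGroup.of (DGen.pi ω') *
        (FreeGroup.of (DGen.pi (ω * ω')))⁻¹)

/-- The extended double affine braid group `B̈`, presented by the generators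
`T_i`, `X_β`, `Ω` and the relations above. -/
abbrev BDD {n : ℕ} (D : AffData n) (cv : Fin (n + 1) → Lat n) {Ω : Type} [Group Ω]
    (ρ : Ω →* Equiv.Perm (Fin (n + 1))) : Type :=
  PresentedGroup {w | DRel D cv ρ w}

namespace BDD
variable {n : ℕ} (D : AffData n) (cv : Fin (n + 1) → Lat n) {Ω : Type} [Group Ω]
  (ρ : Ω →* Equiv.Perm (Fin (n + 1)))
def T (i : Fin (n + 1)) : BDD D cv ρ := PresentedGroup.of (DGen.T i)
def X (β : Lat n) : BDD D cv ρ := PresentedGroup.of (DGen.Xl β)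
def pi (ω : Ω) : BDD D cv ρ := PresentedGroup.of (DGen.pi ω)
/-- the braid lift `T_{s_{i_1}} ⋯ T_{s_{i_p}}` of a word in `W₀`. -/
def wordT (l : List (Fin n)) : BDD D cv ρ := (l.map fun j => T D cv ρ j.succ).prod
end BDD

/-- row of the finite Cartan matrix, as an element of the lattice. -/
def finRow {n : ℕ} (D : AffData n) (i : Fin n) : Lat n :=
  Finsupp.equivFunOnFinite.symm fun k => D.g.A i.succ k.succ

/-- the finite simple reflection `s_i`, `i ∈ I₀`, acting on `P̊^∨`
(untwisted normalisation). -/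
def sF {n : ℕ} (D : AffData n) (i : Fin n) (β : Lat n) : Lat n := β - β i • finRow D i

/-- action of a word `s_{i_1} ⋯ s_{i_p}` in the finite Weyl group on `P̊^∨`. -/
def wordAct {n : ℕ} (D : AffData n) (l : List (Fin n)) (β : Lat n) : Lat n :=
  l.foldr (fun i x => sF D i x) β

/-- Data pinning down the involution `𝔱` of `B̈`, which inverts `T_1,…,T_n`
and interchanges `X_β` with `Y_β` (hence `T₀` with `(T₀^v)⁻¹` and `π_i` with
`ρ_i = X_{ω_i^∨} T_{v_i}⁻¹`).  Since `B̈` is generated by `T_0,…,T_n` and `Ω`,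
the listed values determine `𝔱`. -/
structure TInvData {n : ℕ} (D : AffData n) (cv : Fin (n + 1) → Lat n) {Ω : Type} [Group Ω]
    (ρ : Ω →* Equiv.Perm (Fin (n + 1))) where
  toMap : BDD D cv ρ →* BDD D cv ρ
  /-- coordinates of `θ^∨` -/
  thetaCo : Lat n
  /-- a reduced word for `s_θ` -/
  wtheta : List (Fin n)
  /-- a reduced word for `v_i = w₀ w_{0i}` for each element of `Ω` -/
  vword : Ω → List (Fin n)
  theta_spec : ∀ k, thetaCo k = -(D.g.A 0 k.succ)
  wtheta_act : ∀ β, wordAct D wtheta β = β - (∑ k, D.mark k.succ * β k) • thetaCo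
  wtheta_min : ∀ l : List (Fin n),
    (∀ β, wordAct D l β = β - (∑ k, D.mark k.succ * β k) • thetaCo) →
    wtheta.length ≤ l.length
  vword_act : ∀ ω β, wordAct D (vword ω) β = omLat D (ρ ω) β
  vword_min : ∀ ω, ∀ l : List (Fin n),
    (∀ β, wordAct D l β = omLat D (ρ ω) β) → (vword ω).length ≤ l.length
  /-- `𝔱(T_i) = T_i⁻¹` for `i ∈ I₀` -/
  maps_T : ∀ i : Fin n, toMap (BDD.T D cv ρ i.succ) = (BDD.T D cv ρ i.succ)⁻¹
  /-- `𝔱(T₀) = (T₀^v)⁻¹ = (X_{θ^∨} T_{s_θ}⁻¹)⁻¹` -/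
  maps_T0 : toMap (BDD.T D cv ρ 0) =
    (BDD.X D cv ρ thetaCo * (BDD.wordT D cv ρ wtheta)⁻¹)⁻¹
  /-- `𝔱(π) = ρ_π = X_{ω_{π(0)}^∨} T_{v_π}⁻¹` -/
  maps_pi : ∀ ω : Ω, toMap (BDD.pi D cv ρ ω) =
    BDD.X D cv ρ (omBase (ρ ω 0)) * (BDD.wordT D cv ρ (vword ω))⁻¹
  involutive : ∀ b, toMap (toMap b) = b

/-- The action of `B̈` on the quantum toroidal algebra from the main theorem:
`T_i` acts by `𝒯_i`, `X_{ω_i^∨}` by `𝒳_i 𝒳₀^{-a_i}` and `π ∈ Ω` by `𝒮_π`. -/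
def IsToroidalAction {n : ℕ} (D : AffData n) (o : Fin (n + 1) → 𝕂)
    (cv : Fin (n + 1) → Lat n) {Ω : Type} [Group Ω]
    (ρ : Ω →* Equiv.Perm (Fin (n + 1)))
    (Θ : BDD D cv ρ →* (QA D.g ≃ₐ[𝕂] QA D.g)) : Prop :=
  (∀ i, IsBraidDN D.g i (Θ (BDD.T D cv ρ i))) ∧
  (∀ i : Fin n, ∃ X0 Xi : QA D.g ≃ₐ[𝕂] QA D.g, IsXAut D.g o 0 X0 ∧
      IsXAut D.g o i.succ Xi ∧
      Θ (BDD.X D cv ρ (Finsupp.single i 1)) = Xi * X0 ^ (-(D.mark i.succ))) ∧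
  (∀ ω : Ω, IsSPi D.g (fun a b => o a / o b) (ρ ω) (Θ (BDD.pi D cv ρ ω)))

end QTor

namespace QTor
open scoped Classical

/-! ### The finite Drinfeld new style presentation -/

/-- Generators of the finite presentation: `x0 b i = x^±_{i,0}`,
`x1 true i = x^+_{i,-1}`, `x1 false i = x^-_{i,1}`, `k`, `k⁻¹`, `C^{±1}`. -/
inductive FGen (I : Type) : Type
  | x0 : Bool → I → FGen I
  | x1 : Bool → I → FGen I
  | k : Bool → I → FGen I
  | c : Bool → FGen I

abbrev FF (I : Type) := FreeAlgebra 𝕂 (FGen I)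

namespace FF
variable {I : Type}
def x0 (b : Bool) (i : I) : FF I := FreeAlgebra.ι 𝕂 (FGen.x0 b i)
def x1 (b : Bool) (i : I) : FF I := FreeAlgebra.ι 𝕂 (FGen.x1 b i)
def k (i : I) : FF I := FreeAlgebra.ι 𝕂 (FGen.k true i)
def kinv (i : I) : FF I := FreeAlgebra.ι 𝕂 (FGen.k false i)
def c : FF I := FreeAlgebra.ι 𝕂 (FGen.c true)
def cinv : FF I := FreeAlgebra.ι 𝕂 (FGen.c false)
end FF

/-- The finitely many relations (i)–(xi) of Lemma `lemma for new toroidal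
presentation` / Proposition `simpler toroidal presentation`. -/
inductive FinRel {I : Type} (g : GCM I) : FF I → FF I → Prop
  /- (i) `C^{±1}` central -/
  | c_comm (b : Bool) (a : FGen I) :
      FinRel g (FreeAlgebra.ι 𝕂 (FGen.c b) * FreeAlgebra.ι 𝕂 a)
        (FreeAlgebra.ι 𝕂 a * FreeAlgebra.ι 𝕂 (FGen.c b))
  /- (ii) `C^{±1} C^{∓1} = k_i^{±1} k_i^{∓1} = 1` -/
  | c_inv (b : Bool) :
      FinRel g (FreeAlgebra.ι 𝕂 (FGen.c b) * FreeAlgebra.ι 𝕂 (FGen.c (!b))) 1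
  | k_inv (b : Bool) (i : I) :
      FinRel g (FreeAlgebra.ι 𝕂 (FGen.k b i) * FreeAlgebra.ι 𝕂 (FGen.k (!b) i)) 1
  /- (iii) `[k_i, k_j] = 0` -/
  | kk (b b' : Bool) (i j : I) :
      FinRel g (FreeAlgebra.ι 𝕂 (FGen.k b i) * FreeAlgebra.ι 𝕂 (FGen.k b' j))
        (FreeAlgebra.ι 𝕂 (FGen.k b' j) * FreeAlgebra.ι 𝕂 (FGen.k b i))
  /- (iv) `k_i x^±_{j,m} k_i⁻¹ = q_i^{± a_{ij}} x^±_{j,m}` for `m = 0, ∓1` -/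
  | kx0 (b : Bool) (i j : I) :
      FinRel g (FF.k i * FF.x0 b j * FF.kinv i)
        ((g.qi i ^ (cond b (g.A i j) (-(g.A i j)))) • FF.x0 b j)
  | kx1 (b : Bool) (i j : I) :
      FinRel g (FF.k i * FF.x1 b j * FF.kinv i)
        ((g.qi i ^ (cond b (g.A i j) (-(g.A i j)))) • FF.x1 b j)
  /- (v) `[x^+_{i,0}, x^-_{j,0}] = δ_{ij} (k_i - k_i⁻¹)/(q_i - q_i⁻¹)` -/
  | x00 (i j : I) :
      FinRel g (FF.x0 true i * FF.x0 false j - FF.x0 false j * FF.x0 true i)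
        (if i = j then ((g.qi i - (g.qi i)⁻¹)⁻¹) • (FF.k i - FF.kinv i) else 0)
  /- (vi) `[x^+_{i,-1}, x^-_{j,1}] = δ_{ij} (C⁻¹ k_i - C k_i⁻¹)/(q_i - q_i⁻¹)` -/
  | x11 (i j : I) :
      FinRel g (FF.x1 true i * FF.x1 false j - FF.x1 false j * FF.x1 true i)
        (if i = j then
          ((g.qi i - (g.qi i)⁻¹)⁻¹) • (FF.cinv * FF.k i - FF.c * FF.kinv i) else 0)
  /- (vii) `[x^+_{i,0}, x^-_{j,1}] = [x^+_{i,-1}, x^-_{j,0}] = 0` for `i ≠ j` -/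
  | x01 (i j : I) (hij : i ≠ j) :
      FinRel g (FF.x0 true i * FF.x1 false j) (FF.x1 false j * FF.x0 true i)
  | x10 (i j : I) (hij : i ≠ j) :
      FinRel g (FF.x1 true i * FF.x0 false j) (FF.x0 false j * FF.x1 true i)
  /- (viii) `[x^+_{i,0}, x^+_{i,-1}]_{q_i²} = [x^-_{i,1}, x^-_{i,0}]_{q_i^{-2}} = 0` -/
  | same_p (i : I) : FinRel g (tc (g.qi i ^ (2 : ℤ)) (FF.x0 true i) (FF.x1 true i)) 0
  | same_m (i : I) : FinRel g (tc (g.qi i ^ (-2 : ℤ)) (FF.x1 false i) (FF.x0 false i)) 0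
  /- (ix) `[x^+_{i,0}, x^+_{j,-1}]_{q_i^{a_{ij}}} + [x^+_{j,0}, x^+_{i,-1}]_{q_i^{a_{ij}}} = 0`
      whenever `a_{ij} < 0` -/
  | mix_p (i j : I) (hij : g.A i j < 0) :
      FinRel g (tc (g.qi i ^ g.A i j) (FF.x0 true i) (FF.x1 true j) +
        tc (g.qi i ^ g.A i j) (FF.x0 true j) (FF.x1 true i)) 0
  /- (x) minus version -/
  | mix_m (i j : I) (hij : g.A i j < 0) :
      FinRel g (tc (g.qi i ^ (-(g.A i j))) (FF.x1 false i) (FF.x0 false j) +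
        tc (g.qi i ^ (-(g.A i j))) (FF.x1 false j) (FF.x0 false i)) 0
  /- (xi) quantum Serre relations, for
     `(y_i, y_j) = (x^±_{i,0}, x^±_{j,0}), (x^±_{i,∓1}, x^±_{j,0}), (x^±_{i,0}, x^±_{j,∓1})` -/
  | serre (b : Bool) (i j : I) (hij : i ≠ j) (p : Fin 3) :
      FinRel g (∑ s ∈ Finset.range ((1 - g.A i j).toNat + 1),
        (((-1 : 𝕂) ^ s) * qbinom (g.qi i) (1 - g.A i j).toNat s) •
          ((if p = 1 then FF.x1 b i else FF.x0 b i) ^ s *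
            (if p = 2 then FF.x1 b j else FF.x0 b j) *
            (if p = 1 then FF.x1 b i else FF.x0 b i) ^ ((1 - g.A i j).toNat - s))) 0

/-- The finitely presented algebra of Proposition `simpler toroidal
presentation` (and, in rank 2, the algebra `A_X` of Lemma `lemma for new
toroidal presentation`). -/
abbrev FP {I : Type} (g : GCM I) : Type := RingQuot (FinRel g)

namespace FP
variable {I : Type} (g : GCM I)
def mk : FF I →ₐ[𝕂] FP g := RingQuot.mkAlgHom 𝕂 (FinRel g)
def x0 (b : Bool) (i : I) : FP g := mk g (FF.x0 b i)
def x1 (b : Bool) (i : I) : FP g := mk g (FF.x1 b i)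
def k (i : I) : FP g := mk g (FF.k i)
def kinv (i : I) : FP g := mk g (FF.kinv i)
def c : FP g := mk g FF.c
def cinv : FP g := mk g FF.cinv
end FP

end QTor

namespace QTor
open scoped Classical

/-! ### The braid group `B̂` of a quantum affinization -/

/-- The group of automorphisms of the Dynkin diagram of a GCM. -/
def diagAut {N : ℕ} (g : GCM (Fin N)) : Subgroup (Equiv.Perm (Fin N)) where
  carrier := {e | ∀ i j, g.A (e i) (e j) = g.A i j}
  one_mem' := by intro i j; rfl
  mul_mem' := by
    intro a b ha hb i j
    simpa [Equiv.Perm.mul_apply] using (ha (b i) (b j)).trans (hb i j)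
  inv_mem' := by
    intro a ha i j
    have := ha (a⁻¹ i) (a⁻¹ j)
    simpa using this.symm

/-- Generators of the group `B̂`: `T_i`, `X_i` (`i ∈ I`), and `π ∈ Ω`. -/
inductive HGen (N : ℕ) (Ω : Type) : Type
  | T : Fin N → HGen N Ω
  | X : Fin N → HGen N Ω
  | pi : Ω → HGen N Ω

/-- Defining relations of `B̂` (for a generalised Cartan matrix with
`a_{ij}a_{ji} ≤ 3` off the diagonal). -/
inductive HRel {N : ℕ} (g : GCM (Fin N)) {Ω : Type} [Group Ω]
    (ρ : Ω →* Equiv.Perm (Fin N)) : FreeGroup (HGen N Ω) → Prop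
  /- braid relations whenever `a_{ij} a_{ji} ≤ 3` -/
  | braid (i j : Fin N) (hij : i ≠ j) (hle : g.A i j * g.A j i ≤ 3) :
      HRel g ρ (altWord (FreeGroup.of (HGen.T i)) (FreeGroup.of (HGen.T j))
          ((g.A i j * g.A j i).toNat + 2) *
        (altWord (FreeGroup.of (HGen.T j)) (FreeGroup.of (HGen.T i))
          ((g.A i j * g.A j i).toNat + 2))⁻¹)
  /- `X_i X_j = X_j X_i` -/
  | xx (i j : Fin N) :
      HRel g ρ (FreeGroup.of (HGen.X i) * FreeGroup.of (HGen.X j) *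
        (FreeGroup.of (HGen.X j) * FreeGroup.of (HGen.X i))⁻¹)
  /- `T_i X_j = X_j T_i` whenever `i ≠ j` -/
  | tx (i j : Fin N) (hij : i ≠ j) :
      HRel g ρ (FreeGroup.of (HGen.T i) * FreeGroup.of (HGen.X j) *
        (FreeGroup.of (HGen.X j) * FreeGroup.of (HGen.T i))⁻¹)
  /- `T_i⁻¹ X_i T_i⁻¹ = X_i ∏_{j ∈ I} X_j^{-a_{ij}}` -/
  | txi (i : Fin N) :
      HRel g ρ ((FreeGroup.of (HGen.T i))⁻¹ * FreeGroup.of (HGen.X i) *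
        (FreeGroup.of (HGen.T i))⁻¹ *
        (FreeGroup.of (HGen.X i) *
          (List.ofFn fun j : Fin N => (FreeGroup.of (HGen.X j)) ^ (-(g.A i j))).prod)⁻¹)
  /- `π T_i π⁻¹ = T_{π(i)}` -/
  | piT (ω : Ω) (i : Fin N) :
      HRel g ρ (FreeGroup.of (HGen.pi ω) * FreeGroup.of (HGen.T i) *
        (FreeGroup.of (HGen.pi ω))⁻¹ * (FreeGroup.of (HGen.T (ρ ω i)))⁻¹)
  /- `π X_i π⁻¹ = X_{π(i)}` -/
  | piX (ω : Ω) (i : Fin N) :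
      HRel g ρ (FreeGroup.of (HGen.pi ω) * FreeGroup.of (HGen.X i) *
        (FreeGroup.of (HGen.pi ω))⁻¹ * (FreeGroup.of (HGen.X (ρ ω i)))⁻¹)
  /- the generators indexed by `Ω` multiply as in `Ω` -/
  | pimul (ω ω' : Ω) :
      HRel g ρ (FreeGroup.of (HGen.pi ω) * FreeGroup.of (HGen.pi ω') *
        (FreeGroup.of (HGen.pi (ω * ω')))⁻¹)

/-- The group `B̂` attached to a generalised Cartan matrix. -/
abbrev BHat {N : ℕ} (g : GCM (Fin N)) {Ω : Type} [Group Ω]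
    (ρ : Ω →* Equiv.Perm (Fin N)) : Type :=
  PresentedGroup {w | HRel g ρ w}

end QTor

namespace QTor
open scoped Classical

/-! #### Auxiliary lemmas for Statement 2 -/

lemma q_ne_zero : (q : 𝕂) ≠ 0 := RatFunc.X_ne_zero

lemma q_pow_ne_one {m : ℕ} (hm : m ≠ 0) : (q : 𝕂) ^ m ≠ 1 := by
  have hq : (q : 𝕂) ^ m = algebraMap (Polynomial ℚ) 𝕂 (Polynomial.X ^ m) := by
    simp [q, RatFunc.algebraMap_X]
  rw [hq]
  intro hcon
  have h1 : algebraMap (Polynomial ℚ) 𝕂 1 = 1 := map_one _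
  have h2 := RatFunc.algebraMap_injective (K := ℚ) (hcon.trans h1.symm)
  have h3 := congrArg Polynomial.natDegree h2
  simp [Polynomial.natDegree_X_pow] at h3
  exact hm h3

lemma q_zpow_ne_one {z : ℤ} (hz : z ≠ 0) : (q : 𝕂) ^ z ≠ 1 := by
  rcases lt_trichotomy z 0 with hlt | rfl | hgt
  · intro hcon
    have hcon' : (q : 𝕂) ^ (-z) = 1 := by rw [zpow_neg, hcon, inv_one]
    rw [show (-z) = ((-z).toNat : ℤ) by omega, zpow_natCast] at hcon'
    exact q_pow_ne_one (by omega) hcon'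
  · exact absurd rfl hz
  · intro hcon
    rw [show z = (z.toNat : ℤ) by omega, zpow_natCast] at hcon
    exact q_pow_ne_one (by omega) hcon

lemma q_zpow_sub_ne {a b : ℤ} (hab : a ≠ b) : (q : 𝕂) ^ a - (q : 𝕂) ^ b ≠ 0 := by
  rw [sub_ne_zero]
  intro hcon
  apply q_zpow_ne_one (z := a - b) (by omega)
  rw [zpow_sub₀ q_ne_zero, hcon, div_self (zpow_ne_zero _ q_ne_zero)]

lemma qi_zpow {I : Type} (g : GCM I) (i : I) (m : ℤ) :
    (g.qi i) ^ m = (q : 𝕂) ^ ((g.d i : ℤ) * m) := by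
  rw [GCM.qi, ← zpow_natCast, ← zpow_mul]

lemma qi_sub_inv_ne {I : Type} (g : GCM I) (i : I) : g.qi i - (g.qi i)⁻¹ ≠ 0 := by
  have h1 : g.qi i = (q : 𝕂) ^ ((g.d i : ℤ)) := by
    rw [GCM.qi, ← zpow_natCast]
  have hd := g.dpos i
  rw [h1, ← zpow_neg]
  exact q_zpow_sub_ne (by omega)

lemma qnum_qi_ne {I : Type} (g : GCM I) (i : I) {m : ℤ} (hm : m ≠ 0) :
    qnum (g.qi i) m ≠ 0 := by
  have hd := g.dpos i
  rw [qnum, qi_zpow, qi_zpow]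
  apply div_ne_zero
  · refine q_zpow_sub_ne ?_
    have hd0 : (g.d i : ℤ) ≠ 0 := by exact_mod_cast hd.ne'
    intro hcon
    rw [mul_neg] at hcon
    have hz : (g.d i : ℤ) * m = 0 := by linarith
    exact hm ((mul_eq_zero.mp hz).resolve_left hd0)
  · exact qi_sub_inv_ne g i

lemma pow_mul_pow_eq_one' {A : Type} [Monoid A] {a b : A} (hab : a * b = 1)
    (t : ℕ) : a ^ t * b ^ t = 1 := by
  induction t with
  | zero => simp
  | succ t ih =>
      rw [pow_succ, pow_succ', mul_assoc, ← mul_assoc a, hab, one_mul, ih]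

instance instCharZeroK : CharZero 𝕂 :=
  charZero_of_injective_algebraMap (RatFunc.algebraMap_injective (K := ℚ))

/-- extraction of `h_{i,±r}` from `phiAux`, by downward induction. -/
lemma phi_extract {I : Type} (g : GCM I) (S : Subalgebra 𝕂 (QA g)) (u : 𝕂)
    (hu : u - u⁻¹ ≠ 0) (ε : ℤ) (hε : (ε : 𝕂) ≠ 0) (i : I) (r : ℕ) (hr : 0 < r)
    (hind : ∀ s : ℕ, 0 < s → s < r → QA.mk g (FA.h i (ε * s)) ∈ S)
    (hphi : QA.mk g (phiAux u i ε r) ∈ S) :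
    QA.mk g (FA.h i (ε * r)) ∈ S := by
  classical
  set F : ℕ → QA g := fun l =>
    (((ε : 𝕂) ^ l * (u - u⁻¹) ^ l) / (Nat.factorial l : 𝕂)) •
      ∑ comp ∈ (Finset.Nat.antidiagonalTuple l r).filter (fun f => ∀ t, f t ≠ 0),
        QA.mk g (List.ofFn (fun t : Fin l => FA.h i (ε * (comp t : ℤ)))).prod with hF
  have hsum : ∑ l ∈ Finset.range (r + 1), F l ∈ S := by
    have heq : QA.mk g (phiAux u i ε r) = ∑ l ∈ Finset.range (r + 1), F l := by
      unfold phiAux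
      rw [map_sum]
      refine Finset.sum_congr rfl fun l _ => ?_
      rw [map_smul, map_sum]
    rwa [heq] at hphi
  have hFS : ∀ l, l ≠ 1 → F l ∈ S := by
    intro l hl1
    apply S.smul_mem
    apply S.sum_mem
    intro comp hcomp
    rw [Finset.mem_filter, Finset.Nat.mem_antidiagonalTuple] at hcomp
    obtain ⟨hsum', hne⟩ := hcomp
    rw [map_list_prod]
    apply Subalgebra.list_prod_mem
    intro x hx
    rw [List.map_ofFn] at hx
    rw [List.mem_ofFn] at hx
    obtain ⟨t, rfl⟩ := hx
    have hl2 : 2 ≤ l := by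
      rcases Nat.lt_or_ge l 2 with hcase | hcase
      · interval_cases l
        · exact absurd t.isLt (by simp)
        · exact absurd rfl hl1
      · exact hcase
    haveI : Nontrivial (Fin l) := Fin.nontrivial_iff_two_le.mpr hl2
    obtain ⟨t', ht'⟩ := exists_ne t
    have hlt : comp t < r := by
      calc comp t < ∑ t'', comp t'' :=
            Finset.single_lt_sum ht' (Finset.mem_univ _) (Finset.mem_univ _)
              (Nat.pos_of_ne_zero (hne t')) (fun _ _ _ => Nat.zero_le _)
        _ = r := hsum'
    exact hind (comp t) (Nat.pos_of_ne_zero (hne t)) hlt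
  have h1mem : (1 : ℕ) ∈ Finset.range (r + 1) := Finset.mem_range.mpr (by omega)
  have hrest : ∑ l ∈ (Finset.range (r + 1)).erase 1, F l ∈ S :=
    S.sum_mem fun l hl => hFS l (Finset.ne_of_mem_erase hl)
  have hF1 : F 1 ∈ S := by
    have heq := Finset.add_sum_erase _ F h1mem
    have heq2 : F 1 = (∑ l ∈ Finset.range (r + 1), F l) -
        ∑ l ∈ (Finset.range (r + 1)).erase 1, F l := by
      rw [eq_sub_iff_add_eq, heq]
    rw [heq2]; exact sub_mem hsum hrest
  have hF1eq : F 1 = ((ε : 𝕂) * (u - u⁻¹)) • QA.mk g (FA.h i (ε * r)) := by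
    rw [hF]
    simp only [pow_one, Nat.factorial_one, Nat.cast_one, div_one]
    rw [Finset.Nat.antidiagonalTuple_one, Finset.filter_singleton, if_pos]
    · rw [Finset.sum_singleton]
      congr 1
      simp [List.ofFn_succ]
    · intro t
      simp only [Matrix.cons_val_fin_one]
      omega
  rw [hF1eq] at hF1
  have hfinal := S.smul_mem hF1 ((ε : 𝕂) * (u - u⁻¹))⁻¹
  rwa [inv_smul_smul₀ (mul_ne_zero hε hu)] at hfinal

/-- Corollary `toroidal generated by horizontal and vertical`.
The quantum toroidal algebra is generated as an algebra by its horizontal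
subalgebra `U_h = h.range` and its vertical subalgebra `U_v = v.range`. -/
theorem toroidal_generated_by_horizontal_and_vertical
    {n : ℕ} (D : AffData n)
    (h : QG D.g →ₐ[𝕂] QA D.g) (hh : IsHoriz D h)
    (v : QA (finGCM D.g) →ₐ[𝕂] QA D.g) (hv : IsVert D v) :
    h.range ⊔ v.range = ⊤ := by
  classical
  set S : Subalgebra 𝕂 (QA D.g) := h.range ⊔ v.range with hSdef
  have hle1 : h.range ≤ S := le_sup_left
  have hle2 : v.range ≤ S := le_sup_right
  obtain ⟨hhx, hht, hhti⟩ := hh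
  obtain ⟨hvx, hvh, hvk, hvki, hvc, hvci⟩ := hv
  -- basic generator memberships (phrased via `QA.mk`)
  have hkS : ∀ i, QA.mk D.g (FA.k i) ∈ S := fun i => hle1 ⟨QG.t D.g i, hht i⟩
  have hkiS : ∀ i, QA.mk D.g (FA.kinv i) ∈ S := fun i => hle1 ⟨QG.tinv D.g i, hhti i⟩
  have hx0S : ∀ b i, QA.mk D.g (FA.x b i 0) ∈ S := fun b i => hle1 ⟨QG.e D.g b i, hhx b i⟩
  have hcS : QA.mk D.g (FA.c) ∈ S := hle2 ⟨QA.c (finGCM D.g), hvc⟩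
  have hciS : QA.mk D.g (FA.cinv) ∈ S := hle2 ⟨QA.cinv (finGCM D.g), hvci⟩
  have hxsS : ∀ b (i : Fin n) m, QA.mk D.g (FA.x b i.succ m) ∈ S :=
    fun b i m => hle2 ⟨QA.x (finGCM D.g) b i m, hvx b i m⟩
  have hhsS : ∀ (i : Fin n) r, QA.mk D.g (FA.h i.succ r) ∈ S :=
    fun i r => hle2 ⟨QA.h (finGCM D.g) i r, hvh i r⟩
  -- consequences of the relations in the quotient
  have rel : ∀ {a b : FA (Fin (n + 1))}, ARel D.g a b → QA.mk D.g a = QA.mk D.g b :=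
    fun hr => RingQuot.mkAlgHom_rel _ hr
  have hcci : QA.mk D.g (FA.c) * QA.mk D.g (FA.cinv) = 1 := by
    have h1 := rel (ARel.c_inv (g := D.g) true)
    rw [map_mul, map_one] at h1
    exact h1
  have hcic : QA.mk D.g (FA.cinv) * QA.mk D.g (FA.c) = 1 := by
    have h1 := rel (ARel.c_inv (g := D.g) false)
    rw [map_mul, map_one] at h1
    exact h1
  have hkki : ∀ i, QA.mk D.g (FA.k i) * QA.mk D.g (FA.kinv i) = 1 := by
    intro i
    have h1 := rel (ARel.k_inv (g := D.g) true i)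
    rw [map_mul, map_one] at h1
    exact h1
  have hkik : ∀ i, QA.mk D.g (FA.kinv i) * QA.mk D.g (FA.k i) = 1 := by
    intro i
    have h1 := rel (ARel.k_inv (g := D.g) false i)
    rw [map_mul, map_one] at h1
    exact h1
  have hcpow_eq : ∀ e : ℤ, QA.mk D.g (FA.cpow e) =
      if 0 ≤ e then (QA.mk D.g FA.c) ^ e.toNat else (QA.mk D.g FA.cinv) ^ (-e).toNat := by
    intro e
    rw [FA.cpow]
    split <;> rw [map_pow]
  have hcpowS : ∀ e : ℤ, QA.mk D.g (FA.cpow e) ∈ S := by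
    intro e
    rw [hcpow_eq]
    split
    · exact pow_mem hcS _
    · exact pow_mem hciS _
  have hcpow_inv : ∀ e : ℤ, QA.mk D.g (FA.cpow (-e)) * QA.mk D.g (FA.cpow e) = 1 := by
    intro e
    rw [hcpow_eq, hcpow_eq]
    rcases lt_trichotomy e 0 with hlt | rfl | hgt
    · have h1 : (0 : ℤ) ≤ -e := by omega
      have h2 : ¬ (0 : ℤ) ≤ e := by omega
      rw [if_pos h1, if_neg h2]
      exact pow_mul_pow_eq_one' hcci _
    · simp
    · have h1 : ¬ (0 : ℤ) ≤ -e := by omega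
      have h2 : (0 : ℤ) ≤ e := by omega
      rw [if_neg h1, if_pos h2, neg_neg]
      exact pow_mul_pow_eq_one' hcic _
  -- the finite part is nonempty and node 0 has a neighbour
  have hn1 : 1 ≤ n := by
    by_contra hcon
    have hn0 : n = 0 := by omega
    subst hn0
    have h0 := D.null 0
    rw [Fin.sum_univ_one, D.g.diag] at h0
    have := D.mark_pos 0
    omega
  obtain ⟨j, hj⟩ : ∃ k : Fin n, D.g.A (Fin.succ k) 0 ≠ 0 := by
    by_contra hcon
    push_neg at hcon
    have hzero : ∀ x : Fin (n + 1), x ≠ 0 → D.g.A 0 x = 0 := by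
      intro x hx
      obtain ⟨k, rfl⟩ := Fin.exists_succ_eq.mpr hx
      have hsym := D.g.sym 0 k.succ
      rw [hcon k, mul_zero] at hsym
      have hd0 : ((D.g.d 0 : ℤ)) ≠ 0 := by
        have := D.g.dpos 0; exact_mod_cast this.ne'
      exact (mul_eq_zero.mp hsym).resolve_left hd0
    have hstuck : ∀ x, Relation.ReflTransGen (fun a b => D.g.A a b ≠ 0) 0 x → x = 0 := by
      intro x hx
      induction hx with
      | refl => rfl
      | tail _ hbc ih =>
          subst ih
          by_contra hc0
          exact hbc (hzero _ hc0)
    have hlast := hstuck (Fin.last n) (D.connected 0 (Fin.last n))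
    have : (Fin.last n).val = (0 : Fin (n + 1)).val := congrArg Fin.val hlast
    simp [Fin.val_last] at this
    omega
  -- step lemma for `x^±_{0,m}`
  have xstep : ∀ (b : Bool) (r : ℤ), r ≠ 0 → ∀ m : ℤ,
      QA.mk D.g (FA.x b 0 m) ∈ S → QA.mk D.g (FA.x b 0 (r + m)) ∈ S := by
    intro b r hr m hm
    have hrel := rel (ARel.hx b j.succ 0 r m hr)
    rw [map_sub, map_mul, map_mul, map_smul, map_mul] at hrel
    set coef : 𝕂 :=
      (cond b 1 (-1) : 𝕂) * qnum (D.g.qi j.succ) (r * D.g.A j.succ 0) / (r : 𝕂) with hcoef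
    have hcoefne : coef ≠ 0 := by
      rw [hcoef]
      apply div_ne_zero
      · apply mul_ne_zero
        · cases b <;> norm_num
        · exact qnum_qi_ne D.g j.succ (mul_ne_zero hr hj)
      · exact (Int.cast_ne_zero (α := 𝕂)).mpr hr
    have hLS : QA.mk D.g (FA.h j.succ r) * QA.mk D.g (FA.x b 0 m) -
        QA.mk D.g (FA.x b 0 m) * QA.mk D.g (FA.h j.succ r) ∈ S :=
      sub_mem (mul_mem (hhsS j r) hm) (mul_mem hm (hhsS j r))
    rw [hrel] at hLS
    have h2 : QA.mk D.g (FA.cpow (cond b (min r 0) (max r 0))) *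
        QA.mk D.g (FA.x b 0 (r + m)) ∈ S := by
      have h3 := S.smul_mem hLS coef⁻¹
      rwa [inv_smul_smul₀ hcoefne] at h3
    have h4 := mul_mem (hcpowS (-(cond b (min r 0) (max r 0)))) h2
    rwa [← mul_assoc, hcpow_inv, one_mul] at h4
  -- all `x^±_{0,m}` are in `S`
  have hx0all : ∀ (b : Bool) (m : ℤ), QA.mk D.g (FA.x b 0 m) ∈ S := by
    intro b m
    induction m using Int.induction_on with
    | zero => exact hx0S b 0
    | succ i ih =>
        have := xstep b 1 one_ne_zero i ih
        rwa [show (1 : ℤ) + i = i + 1 by ring] at this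
    | pred i ih =>
        have := xstep b (-1) (by norm_num) (-i) ih
        rwa [show (-1 : ℤ) + (-i) = -(i : ℤ) - 1 by ring] at this
  -- `phiAux` memberships via the `[x⁺, x⁻]` relation
  have hu : D.g.qi 0 - (D.g.qi 0)⁻¹ ≠ 0 := qi_sub_inv_ne D.g 0
  have hphiP : ∀ r : ℕ, 0 < r → QA.mk D.g (phiAux (D.g.qi 0) 0 1 r) ∈ S := by
    intro r hr
    have hrel := rel (ARel.xpm (g := D.g) 0 0 (r : ℤ) 0)
    rw [if_pos rfl] at hrel
    have hc1 : (0 : ℤ) ≤ (r : ℤ) + 0 := by omega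
    have hc2 : ¬ ((r : ℤ) + 0 ≤ 0) := by omega
    have hphi1 : phi D.g true (0 : Fin (n + 1)) ((r : ℤ) + 0) =
        FA.k 0 * phiAux (D.g.qi 0) 0 1 r := by
      rw [phi, if_pos rfl, if_pos hc1, add_zero, Int.toNat_natCast]
    have hphi2 : phi D.g false (0 : Fin (n + 1)) ((r : ℤ) + 0) = 0 := by
      rw [phi, if_neg Bool.false_ne_true, if_neg hc2]
    have hcp0 : (FA.cpow (0 : ℤ) : FA (Fin (n + 1))) = 1 := by
      rw [FA.cpow, if_pos le_rfl]; simp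
    rw [hphi1, hphi2, mul_zero, sub_zero, neg_zero, hcp0, one_mul,
      map_smul, map_mul, map_sub, map_mul, map_mul] at hrel
    have hLS : QA.mk D.g (FA.x true 0 r) * QA.mk D.g (FA.x false 0 0) -
        QA.mk D.g (FA.x false 0 0) * QA.mk D.g (FA.x true 0 r) ∈ S :=
      sub_mem (mul_mem (hx0all true r) (hx0S false 0))
        (mul_mem (hx0S false 0) (hx0all true r))
    rw [hrel] at hLS
    have h2 : QA.mk D.g (FA.k 0) * QA.mk D.g (phiAux (D.g.qi 0) 0 1 r) ∈ S := by
      have h3 := S.smul_mem hLS (D.g.qi 0 - (D.g.qi 0)⁻¹)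
      rwa [smul_inv_smul₀ hu] at h3
    have h4 := mul_mem (hkiS 0) h2
    rwa [← mul_assoc, hkik, one_mul] at h4
  have hphiM : ∀ r : ℕ, 0 < r → QA.mk D.g (phiAux (D.g.qi 0) 0 (-1) r) ∈ S := by
    intro r hr
    have hrel := rel (ARel.xpm (g := D.g) 0 0 0 (-(r : ℤ)))
    rw [if_pos rfl] at hrel
    have hc1 : ¬ ((0 : ℤ) ≤ 0 + -(r : ℤ)) := by omega
    have hc2 : (0 : ℤ) + -(r : ℤ) ≤ 0 := by omega
    have hphi1 : phi D.g true (0 : Fin (n + 1)) ((0 : ℤ) + -(r : ℤ)) = 0 := by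
      rw [phi, if_pos rfl, if_neg hc1]
    have hphi2 : phi D.g false (0 : Fin (n + 1)) ((0 : ℤ) + -(r : ℤ)) =
        FA.kinv 0 * phiAux (D.g.qi 0) 0 (-1) r := by
      rw [phi, if_neg Bool.false_ne_true, if_pos hc2,
        show (-((0 : ℤ) + -(r : ℤ))).toNat = r by omega]
    have hcp0 : (FA.cpow (0 : ℤ) : FA (Fin (n + 1))) = 1 := by
      rw [FA.cpow, if_pos le_rfl]; simp
    rw [hphi1, hphi2, mul_zero, zero_sub, neg_zero, hcp0, one_mul,
      map_smul, map_neg, map_mul, map_sub, map_mul, map_mul] at hrel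
    have hLS : QA.mk D.g (FA.x true 0 0) * QA.mk D.g (FA.x false 0 (-(r : ℤ))) -
        QA.mk D.g (FA.x false 0 (-(r : ℤ))) * QA.mk D.g (FA.x true 0 0) ∈ S :=
      sub_mem (mul_mem (hx0S true 0) (hx0all false _))
        (mul_mem (hx0all false _) (hx0S true 0))
    rw [hrel, smul_neg] at hLS
    have hLS2 : (D.g.qi 0 - (D.g.qi 0)⁻¹)⁻¹ •
        (QA.mk D.g (FA.kinv 0) * QA.mk D.g (phiAux (D.g.qi 0) 0 (-1) r)) ∈ S := by
      have := S.neg_mem hLS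
      rwa [neg_neg] at this
    have h2 : QA.mk D.g (FA.kinv 0) * QA.mk D.g (phiAux (D.g.qi 0) 0 (-1) r) ∈ S := by
      have h3 := S.smul_mem hLS2 (D.g.qi 0 - (D.g.qi 0)⁻¹)
      rwa [smul_inv_smul₀ hu] at h3
    have h4 := mul_mem (hkS 0) h2
    rwa [← mul_assoc, hkki, one_mul] at h4
  -- all `h_{0,r}` are in `S`
  have hh0 : ∀ r : ℕ, 0 < r → ∀ ε : ℤ, (ε = 1 ∨ ε = -1) →
      QA.mk D.g (FA.h 0 (ε * r)) ∈ S := by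
    intro r
    induction r using Nat.strong_induction_on with
    | _ r ih =>
        intro hr ε hε
        have hεne : (ε : 𝕂) ≠ 0 := by rcases hε with rfl | rfl <;> norm_num
        refine phi_extract D.g S (D.g.qi 0) hu ε hεne 0 r hr
          (fun s hs hsr => ih s hsr hs ε hε) ?_
        rcases hε with rfl | rfl
        · exact hphiP r hr
        · exact hphiM r hr
  have hhall : ∀ r : ℤ, QA.mk D.g (FA.h 0 r) ∈ S := by
    intro r
    rcases lt_trichotomy r 0 with hlt | rfl | hgt
    · have := hh0 (-r).toNat (by omega) (-1) (Or.inr rfl)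
      rwa [show (-1 : ℤ) * ((-r).toNat : ℤ) = r by omega] at this
    · have h1 := rel (ARel.h_zero (g := D.g) 0)
      rw [map_zero] at h1
      rw [h1]
      exact S.zero_mem
    · have := hh0 r.toNat (by omega) 1 (Or.inl rfl)
      rwa [show (1 : ℤ) * (r.toNat : ℤ) = r by omega] at this
  -- conclude
  rw [eq_top_iff]
  rintro a -
  obtain ⟨y, rfl⟩ := RingQuot.mkAlgHom_surjective 𝕂 (ARel D.g) a
  show QA.mk D.g y ∈ S
  induction y using FreeAlgebra.induction with
  | grade0 r =>
      rw [AlgHom.commutes]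
      exact S.algebraMap_mem r
  | grade1 a =>
      cases a with
      | x b i m =>
          induction i using Fin.cases with
          | zero => exact hx0all b m
          | succ k => exact hxsS b k m
      | h i r =>
          induction i using Fin.cases with
          | zero => exact hhall r
          | succ k => exact hhsS k r
      | k b i => cases b with
          | true => exact hkS i
          | false => exact hkiS i
      | c b => cases b with
          | true => exact hcS
          | false => exact hciS
  | mul x y hx hy =>
      rw [map_mul]
      exact mul_mem hx hy
  | add x y hx hy =>
      rw [map_add]
      exact add_mem hx hy

end QTor
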